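/- arXiv:quant-ph/9904005 — 5 statements merged into one kernel-verified Lean document; each statement's English description precedes it below -/
import Mathlib

section
/- If ρ is a separable state on H_A ⊗ H_B with rank(ρ) ≠ rank(ρ^{T_B}), then either the minimal separable-decomposition cardinality L(ρ) > rank(ρ), or L(ρ^{T_B}) > rank(ρ^{T_B}). -/
open Matrix BigOperators
open scoped ComplexOrder

/-- The partial transpose on the B system, in the chosen (computational) basis. -/
def ptB {mA mB : Type*} (ρ : Matrix (mA × mB) (mA × mB) ℂ) :
    Matrix (mA × mB) (mA × mB) ℂ :=
  fun p q => ρ (p.1, q.2) (q.1, p.2)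

/-- `SepDecomp ρ k` : ρ admits a separable decomposition into exactly `k` product
pure states, ρ = Σ_{i=1}^k p_i |ψ_i⟩⟨ψ_i| ⊗ |φ_i⟩⟨φ_i| with p_i > 0, Σ p_i = 1. -/
def SepDecomp {mA mB : Type*} [Fintype mA] [Fintype mB]
    (ρ : Matrix (mA × mB) (mA × mB) ℂ) (k : ℕ) : Prop :=
  ∃ (p : Fin k → ℝ) (ψ : Fin k → mA → ℂ) (φ : Fin k → mB → ℂ),
    (∀ i, 0 < p i) ∧ (∑ i, p i = 1) ∧
    (∀ i, star (ψ i) ⬝ᵥ ψ i = 1) ∧ (∀ i, star (φ i) ⬝ᵥ φ i = 1) ∧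
    ρ = ∑ i, (p i : ℂ) • Matrix.kroneckerMap (· * ·)
        (Matrix.vecMulVec (ψ i) (star (ψ i))) (Matrix.vecMulVec (φ i) (star (φ i)))

/-- A state is separable if it admits some separable decomposition. -/
def Separable {mA mB : Type*} [Fintype mA] [Fintype mB]
    (ρ : Matrix (mA × mB) (mA × mB) ℂ) : Prop :=
  ∃ k, SepDecomp ρ k

/-- The minimal number of product pure states in a separable decomposition. -/
noncomputable def sepCard {mA mB : Type*} [Fintype mA] [Fintype mB]
    (ρ : Matrix (mA × mB) (mA × mB) ℂ) : ℕ :=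
  sInf {k | SepDecomp ρ k}

section AuxLemmas

lemma range_add_le' {V W : Type*} [AddCommGroup V] [AddCommGroup W] [Module ℂ V] [Module ℂ W]
    (f g : V →ₗ[ℂ] W) : LinearMap.range (f + g) ≤ LinearMap.range f ⊔ LinearMap.range g := by
  rintro x ⟨y, rfl⟩
  exact Submodule.add_mem_sup ⟨y, rfl⟩ ⟨y, rfl⟩

lemma myrank_add_le {m n : Type*} [Fintype n] (A B : Matrix m n ℂ) :
    (A + B).rank ≤ A.rank + B.rank := by
  rw [Matrix.rank, Matrix.rank, Matrix.rank, Matrix.mulVecLin_add]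
  refine le_trans (Submodule.finrank_mono (range_add_le' _ _)) ?_
  exact Submodule.finrank_add_le_finrank_add_finrank _ _

lemma myrank_vecMulVec_le {m n : Type*} [Fintype n] (u : m → ℂ) (v : n → ℂ) :
    (Matrix.vecMulVec u v).rank ≤ 1 := by
  rw [Matrix.vecMulVec_eq Unit]
  exact le_trans (Matrix.rank_mul_le_left _ _)
    (by simpa using Matrix.rank_le_card_width (Matrix.replicateCol Unit u))

lemma myrank_sum_le {m n ι : Type*} [Fintype n] (s : Finset ι) (f : ι → Matrix m n ℂ)
    (h : ∀ i, (f i).rank ≤ 1) : (∑ i ∈ s, f i).rank ≤ s.card := by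
  classical
  induction s using Finset.induction with
  | empty => simp [Matrix.rank_zero]
  | @insert a s hx ih =>
    rw [Finset.sum_insert hx, Finset.card_insert_of_notMem hx]
    have h1 := h a
    exact (myrank_add_le _ _).trans (by omega)

lemma sepDecomp_rank_le {mA mB : Type*} [Fintype mA] [Fintype mB]
    {ρ : Matrix (mA × mB) (mA × mB) ℂ} {k : ℕ} (h : SepDecomp ρ k) : ρ.rank ≤ k := by
  obtain ⟨p, ψ, φ, hp, hs, hψ, hφ, hρ⟩ := h
  rw [hρ]
  have := myrank_sum_le (Finset.univ : Finset (Fin k))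
    (fun i => (p i : ℂ) • Matrix.kroneckerMap (· * ·)
        (Matrix.vecMulVec (ψ i) (star (ψ i))) (Matrix.vecMulVec (φ i) (star (φ i))))
    (fun i => by
      have heq : (p i : ℂ) • Matrix.kroneckerMap (· * ·)
          (Matrix.vecMulVec (ψ i) (star (ψ i))) (Matrix.vecMulVec (φ i) (star (φ i)))
          = Matrix.vecMulVec (fun pr : mA × mB => (p i : ℂ) * ψ i pr.1 * φ i pr.2)
            (fun q : mA × mB => star (ψ i q.1) * star (φ i q.2)) := by
        funext pr q
        simp only [Matrix.smul_apply, Matrix.kroneckerMap_apply, Matrix.vecMulVec_apply,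
          Pi.star_apply, smul_eq_mul]
        ring
      rw [heq]
      exact myrank_vecMulVec_le _ _)
  simpa using this

lemma ptB_ptB {mA mB : Type*} (ρ : Matrix (mA × mB) (mA × mB) ℂ) : ptB (ptB ρ) = ρ := rfl

lemma sepDecomp_ptB {mA mB : Type*} [Fintype mA] [Fintype mB]
    {ρ : Matrix (mA × mB) (mA × mB) ℂ} {k : ℕ} (h : SepDecomp ρ k) :
    SepDecomp (ptB ρ) k := by
  obtain ⟨p, ψ, φ, hp, hs, hψ, hφ, hρ⟩ := h
  refine ⟨p, ψ, fun i => star (φ i), hp, hs, hψ, ?_, ?_⟩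
  · intro i
    have := hφ i
    simp only [dotProduct, Pi.star_apply, star_star] at this ⊢
    rw [← this]
    exact Finset.sum_congr rfl fun x _ => mul_comm _ _
  · funext pq rs
    have h1 : ρ (pq.1, rs.2) (rs.1, pq.2) = _ := congrFun (congrFun hρ (pq.1, rs.2)) (rs.1, pq.2)
    simp only [ptB, h1, Matrix.sum_apply, Matrix.smul_apply, smul_eq_mul,
      Matrix.kroneckerMap_apply, Matrix.vecMulVec_apply, Pi.star_apply, star_star]
    exact Finset.sum_congr rfl fun i _ => by ring

lemma sepDecomp_ptB_iff {mA mB : Type*} [Fintype mA] [Fintype mB]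
    (ρ : Matrix (mA × mB) (mA × mB) ℂ) (k : ℕ) :
    SepDecomp (ptB ρ) k ↔ SepDecomp ρ k :=
  ⟨fun h => by simpa [ptB_ptB] using sepDecomp_ptB h, sepDecomp_ptB⟩

lemma sepCard_ptB {mA mB : Type*} [Fintype mA] [Fintype mB]
    (ρ : Matrix (mA × mB) (mA × mB) ℂ) : sepCard (ptB ρ) = sepCard ρ := by
  unfold sepCard
  congr 1
  ext k
  exact sepDecomp_ptB_iff ρ k

end AuxLemmas

/-- If ρ is separable with rank(ρ) ≠ rank(ρ^{T_B}), then either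
L(ρ) > rank(ρ) or L(ρ^{T_B}) > rank(ρ^{T_B}). -/
theorem sepCard_gt_rank_of_rank_ne {mA mB : Type*} [Fintype mA] [Fintype mB]
    [DecidableEq mA] [DecidableEq mB]
    (ρ : Matrix (mA × mB) (mA × mB) ℂ) (hsep : Separable ρ)
    (hrank : ρ.rank ≠ (ptB ρ).rank) :
    ρ.rank < sepCard ρ ∨ (ptB ρ).rank < sepCard (ptB ρ) := by
  by_contra hc
  push_neg at hc
  obtain ⟨h1, h2⟩ := hc
  obtain ⟨k, hk⟩ := hsep
  have hne : {k | SepDecomp ρ k}.Nonempty := ⟨k, hk⟩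
  have hmem : SepDecomp ρ (sepCard ρ) := Nat.sInf_mem hne
  have hr1 : ρ.rank ≤ sepCard ρ := sepDecomp_rank_le hmem
  have hr2 : (ptB ρ).rank ≤ sepCard (ptB ρ) :=
    sepDecomp_rank_le (by rw [sepCard_ptB]; exact sepDecomp_ptB hmem)
  rw [sepCard_ptB] at h2 hr2
  omega
end

section
/- If a density matrix ρ on a finite-dimensional Hilbert space can be written as ρ = Σ_{i=1}^k p_i |ψ_i⟩⟨ψ_i| with p_i > 0 and the unit vectors |ψ_i⟩ are not pairwise orthogonal (i.e., ⟨ψ_i|ψ_j⟩ ≠ 0 for some i ≠ j), then the von Neumann entropy satisfies S(ρ) < log k. Equivalently, if S(ρ) = log k then any such decomposition into k pure states consists of pairwise orthogonal vectors with equal weights 1/k. -/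
open Matrix BigOperators
open scoped ComplexOrder

/-- The von Neumann entropy S(ρ) = -Tr ρ log ρ of a Hermitian matrix, computed via its
eigenvalues (with the convention 0 log 0 = 0). -/
noncomputable def vnEntropy {n : Type*} [Fintype n] [DecidableEq n]
    {ρ : Matrix n n ℂ} (hρ : ρ.IsHermitian) : ℝ :=
  -∑ i, hρ.eigenvalues i * Real.log (hρ.eigenvalues i)

section Aux

variable {n : Type*} [Fintype n] [DecidableEq n]

lemma aux_rank_add_le (A B : Matrix n n ℂ) : (A + B).rank ≤ A.rank + B.rank := by
  have h : LinearMap.range ((A + B).mulVecLin) ≤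
      LinearMap.range A.mulVecLin ⊔ LinearMap.range B.mulVecLin := by
    rw [Matrix.mulVecLin_add]
    rintro x ⟨y, rfl⟩
    exact Submodule.mem_sup.2 ⟨A.mulVecLin y, ⟨y, rfl⟩, B.mulVecLin y, ⟨y, rfl⟩, rfl⟩
  exact (Submodule.finrank_mono h).trans
    (Submodule.finrank_add_le_finrank_add_finrank _ _)

lemma aux_rank_sum_le {ι : Type*} (t : Finset ι) (f : ι → Matrix n n ℂ) :
    (∑ i ∈ t, f i).rank ≤ ∑ i ∈ t, (f i).rank := by
  classical
  induction t using Finset.cons_induction with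
  | empty => simp [Matrix.rank_zero]
  | cons a t ha ih =>
      rw [Finset.sum_cons, Finset.sum_cons]
      exact (aux_rank_add_le _ _).trans (add_le_add le_rfl ih)

lemma aux_rank_le_one (c : ℂ) (u v : n → ℂ) : (c • Matrix.vecMulVec u v).rank ≤ 1 := by
  have h1 : c • Matrix.vecMulVec u v = (c • (1 : Matrix n n ℂ)) * Matrix.vecMulVec u v := by
    rw [smul_mul_assoc, one_mul]
  rw [h1, Matrix.vecMulVec_eq Unit]
  calc ((c • (1 : Matrix n n ℂ)) * (Matrix.replicateCol Unit u * Matrix.replicateRow Unit v)).rank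
      ≤ (Matrix.replicateCol Unit u * Matrix.replicateRow Unit v).rank := Matrix.rank_mul_le_right _ _
    _ ≤ (Matrix.replicateCol Unit u).rank := Matrix.rank_mul_le_left _ _
    _ ≤ 1 := by simpa using Matrix.rank_le_card_width (Matrix.replicateCol Unit u)

lemma aux_traces {A : Matrix n n ℂ} (hA : A.IsHermitian) :
    A.trace = ∑ i, (hA.eigenvalues i : ℂ) ∧
    (A * A).trace = ∑ i, ((hA.eigenvalues i ^ 2 : ℝ) : ℂ) := by
  set V : Matrix n n ℂ := (hA.eigenvectorUnitary : Matrix n n ℂ) with hV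
  have hV1 : star V * V = 1 :=
    Matrix.mem_unitaryGroup_iff'.mp hA.eigenvectorUnitary.2
  have key : ∀ D : Matrix n n ℂ, (V * D * star V).trace = D.trace := by
    intro D
    rw [Matrix.trace_mul_comm, ← Matrix.mul_assoc, hV1, Matrix.one_mul]
  set D : Matrix n n ℂ := Matrix.diagonal (RCLike.ofReal ∘ hA.eigenvalues) with hD
  constructor
  · conv_lhs => rw [hA.spectral_theorem, Unitary.conjStarAlgAut_apply]
    rw [← hV, ← hD, key, hD, Matrix.trace_diagonal]
    simp
  · conv_lhs => rw [hA.spectral_theorem, Unitary.conjStarAlgAut_apply]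
    rw [← hV, ← hD]
    have h2 : (V * D * star V) * (V * D * star V) = V * (D * D) * star V := by
      simp only [Matrix.mul_assoc]
      rw [← Matrix.mul_assoc (star V) V, hV1, Matrix.one_mul]
    rw [h2, key, hD, Matrix.diagonal_mul_diagonal, Matrix.trace_diagonal]
    refine Finset.sum_congr rfl fun i _ => ?_
    simp [Function.comp_apply, pow_two, Complex.ofReal_mul]

lemma aux_trace_vmv (u v : n → ℂ) :
    (Matrix.vecMulVec u (star u) * Matrix.vecMulVec v (star v)).trace
      = (star u ⬝ᵥ v) * (star v ⬝ᵥ u) := by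
  simp only [Matrix.trace, Matrix.diag, Matrix.mul_apply, Matrix.vecMulVec_apply,
    Pi.star_apply, dotProduct, Finset.sum_mul_sum]
  rw [Finset.sum_comm]
  exact Finset.sum_congr rfl fun a _ => Finset.sum_congr rfl fun c _ => by ring

end Aux

set_option maxHeartbeats 1600000 in
/-- If a density matrix ρ = Σ_{i=1}^k p_i |ψ_i⟩⟨ψ_i| (p_i > 0, unit
vectors) has two non-orthogonal states in the decomposition, then S(ρ) < log k.
Equivalently, if S(ρ) = log k then the ψ_i are pairwise orthogonal and p_i = 1/k. -/
theorem entropy_lt_log_of_nonorthogonal {n : Type*} [Fintype n] [DecidableEq n]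
    (ρ : Matrix n n ℂ) (hPSD : ρ.PosSemidef) (htr : ρ.trace = 1)
    (k : ℕ) (p : Fin k → ℝ) (ψ : Fin k → n → ℂ)
    (hp : ∀ i, 0 < p i) (hpsum : ∑ i, p i = 1)
    (hunit : ∀ i, star (ψ i) ⬝ᵥ ψ i = 1)
    (hdec : ρ = ∑ i, (p i : ℂ) • Matrix.vecMulVec (ψ i) (star (ψ i))) :
    ((∃ i j, i ≠ j ∧ star (ψ i) ⬝ᵥ ψ j ≠ 0) → vnEntropy hPSD.1 < Real.log k) ∧
    (vnEntropy hPSD.1 = Real.log k →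
      (∀ i j, i ≠ j → star (ψ i) ⬝ᵥ ψ j = 0) ∧ (∀ i, p i = 1 / k)) := by
  classical
  have hk0 : k ≠ 0 := by rintro rfl; simpa using hpsum
  have hkpos : (0:ℝ) < k := by exact_mod_cast Nat.pos_of_ne_zero hk0
  have hkne : (k:ℝ) ≠ 0 := ne_of_gt hkpos
  set hH := hPSD.1 with hHdef
  set lam : n → ℝ := hH.eigenvalues with hlam
  have hl0 : ∀ i, 0 ≤ lam i := fun i => hPSD.eigenvalues_nonneg i
  have htrace := (aux_traces hH).1
  have hlsum : ∑ i, lam i = 1 := by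
    have h1 : ((∑ i, lam i : ℝ) : ℂ) = 1 := by
      push_cast
      rw [← htrace, htr]
    exact_mod_cast h1
  set s : Finset n := Finset.univ.filter (fun i => lam i ≠ 0) with hs
  have hssum : ∑ i ∈ s, lam i = 1 := by
    rw [hs, Finset.sum_filter_ne_zero]
    exact hlsum
  have hlpos : ∀ i ∈ s, 0 < lam i :=
    fun i hi => lt_of_le_of_ne (hl0 i) (Ne.symm (Finset.mem_filter.1 hi).2)
  -- rank bound
  have hrank : ρ.rank ≤ k := by
    rw [hdec]
    calc (∑ i, (p i : ℂ) • Matrix.vecMulVec (ψ i) (star (ψ i))).rank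
        ≤ ∑ i : Fin k, ((p i : ℂ) • Matrix.vecMulVec (ψ i) (star (ψ i))).rank :=
          aux_rank_sum_le _ _
      _ ≤ ∑ _i : Fin k, 1 := Finset.sum_le_sum fun i _ => aux_rank_le_one _ _ _
      _ = k := by simp
  have hcard : s.card = ρ.rank := by
    rw [hH.rank_eq_card_non_zero_eigs, Fintype.card_subtype]
  have hsk : s.card ≤ k := by rw [hcard]; exact hrank
  -- key identity: log k - S = ∑_{i ∈ s} λ_i log(k λ_i)
  have hkey : Real.log k - vnEntropy hH = ∑ i ∈ s, lam i * Real.log (k * lam i) := by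
    unfold vnEntropy
    rw [sub_neg_eq_add]
    have h1 : Real.log k = ∑ i, lam i * Real.log k := by
      rw [← Finset.sum_mul, hlsum, one_mul]
    rw [h1, ← Finset.sum_add_distrib]
    calc ∑ i, (lam i * Real.log k + lam i * Real.log (lam i))
        = ∑ i, (if lam i ≠ 0 then lam i * Real.log (k * lam i) else 0) := by
          refine Finset.sum_congr rfl fun i _ => ?_
          by_cases h : lam i = 0
          · simp [h]
          · rw [if_pos h, Real.log_mul hkne h]; ring
      _ = ∑ i ∈ s, lam i * Real.log (k * lam i) := (Finset.sum_filter _ _).symm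
  -- termwise lower bound
  have hterm : ∀ i ∈ s, lam i - 1/k ≤ lam i * Real.log (k * lam i) := by
    intro i hi
    have hli := hlpos i hi
    have ht : 0 < (k:ℝ) * lam i := mul_pos hkpos hli
    have hlog : 1 - ((k:ℝ) * lam i)⁻¹ ≤ Real.log ((k:ℝ) * lam i) := by
      have h := Real.log_le_sub_one_of_pos (inv_pos.2 ht)
      rw [Real.log_inv] at h
      linarith
    have h2 : lam i * (1 - ((k:ℝ) * lam i)⁻¹) = lam i - 1/k := by
      field_simp
    calc lam i - 1/k = lam i * (1 - ((k:ℝ)*lam i)⁻¹) := h2.symm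
      _ ≤ lam i * Real.log ((k:ℝ)*lam i) := mul_le_mul_of_nonneg_left hlog hli.le
  have h3 : ∑ i ∈ s, (lam i - 1/k) = 1 - (s.card:ℝ)/k := by
    rw [Finset.sum_sub_distrib, hssum, Finset.sum_const, nsmul_eq_mul]
    ring
  have hsumlb : 1 - (s.card : ℝ)/k ≤ ∑ i ∈ s, lam i * Real.log (k*lam i) := by
    have h4 := Finset.sum_le_sum hterm
    rw [h3] at h4
    exact h4
  have hcardk : (s.card:ℝ)/k ≤ 1 := by
    rw [div_le_one hkpos]
    exact_mod_cast hsk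
  have hSle : vnEntropy hH ≤ Real.log k := by linarith
  have hpart2 : vnEntropy hH = Real.log k →
      (∀ i j, i ≠ j → star (ψ i) ⬝ᵥ ψ j = 0) ∧ (∀ i, p i = 1 / k) := by
    intro hS
    have hzero : ∑ i ∈ s, lam i * Real.log (k*lam i) = 0 := by
      rw [← hkey, hS]; ring
    have hrk : (s.card:ℝ) = k := by
      have h5 : 1 - (s.card:ℝ)/k ≤ 0 := hsumlb.trans (le_of_eq hzero)
      have h6 : (1:ℝ) ≤ (s.card:ℝ)/k := by linarith
      rw [le_div_iff₀ hkpos, one_mul] at h6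
      have h7 : (s.card:ℝ) ≤ k := by exact_mod_cast hsk
      linarith
    have hterm0 : ∀ i ∈ s, lam i * Real.log (k*lam i) - (lam i - 1/k) = 0 := by
      have hsum0 : ∑ i ∈ s, (lam i * Real.log (k*lam i) - (lam i - 1/k)) = 0 := by
        rw [Finset.sum_sub_distrib, hzero, h3, hrk]
        field_simp
        norm_num
      exact fun i hi =>
        (Finset.sum_eq_zero_iff_of_nonneg
          (fun i hi => sub_nonneg.2 (hterm i hi))).1 hsum0 i hi
    have hlamval : ∀ i ∈ s, lam i = 1/k := by
      intro i hi
      have hli := hlpos i hi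
      have ht : 0 < (k:ℝ) * lam i := mul_pos hkpos hli
      by_contra hne
      have htne : (k:ℝ)*lam i ≠ 1 := by
        intro h
        exact hne (by rw [eq_div_iff hkne]; linarith [h])
      have hstrict : 1 - ((k:ℝ)*lam i)⁻¹ < Real.log ((k:ℝ)*lam i) := by
        have hinv : ((k:ℝ)*lam i)⁻¹ ≠ 1 := fun h => htne (by rwa [inv_eq_one] at h)
        have h := Real.log_lt_sub_one_of_pos (inv_pos.2 ht) hinv
        rw [Real.log_inv] at h
        linarith
      have h2 : lam i * (1 - ((k:ℝ) * lam i)⁻¹) = lam i - 1/k := by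
        field_simp
      have h8 := hterm0 i hi
      nlinarith [mul_lt_mul_of_pos_left hstrict hli]
    have hsq : ∑ i, lam i ^ 2 = 1/k := by
      have h9 : ∑ i, lam i ^2 = ∑ i ∈ s, lam i ^2 := by
        refine (Finset.sum_subset (Finset.filter_subset _ _) fun x _ hx => ?_).symm
        have hx0 : lam x = 0 := by
          by_contra h
          exact hx (Finset.mem_filter.2 ⟨Finset.mem_univ x, h⟩)
        rw [hx0]; ring
      rw [h9]
      calc ∑ i ∈ s, lam i^2 = ∑ i ∈ s, (1/k:ℝ)^2 :=
            Finset.sum_congr rfl fun i hi => by rw [hlamval i hi]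
        _ = s.card * (1/k:ℝ)^2 := by rw [Finset.sum_const, nsmul_eq_mul]
        _ = 1/k := by rw [hrk]; field_simp
    have htr2 := (aux_traces hH).2
    have hdec2 : (ρ * ρ).trace =
        ((∑ i, ∑ j, p i * p j * Complex.normSq (star (ψ i) ⬝ᵥ ψ j) : ℝ) : ℂ) := by
      conv_lhs => rw [hdec]
      rw [Finset.sum_mul_sum, Matrix.trace_sum]
      push_cast
      refine Finset.sum_congr rfl fun i _ => ?_
      rw [Matrix.trace_sum]
      refine Finset.sum_congr rfl fun j _ => ?_
      rw [smul_mul_assoc, mul_smul_comm, smul_smul, Matrix.trace_smul, aux_trace_vmv]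
      have hstar : star (ψ j) ⬝ᵥ ψ i = star (star (ψ i) ⬝ᵥ ψ j) := Matrix.star_dotProduct _ _
      rw [hstar]
      rw [show (star (ψ i) ⬝ᵥ ψ j) * star (star (ψ i) ⬝ᵥ ψ j)
          = ((Complex.normSq (star (ψ i) ⬝ᵥ ψ j) : ℝ) : ℂ) from by
        rw [← Complex.mul_conj]; rfl]
      rw [smul_eq_mul]
    have hreal : ∑ i, ∑ j, p i * p j * Complex.normSq (star (ψ i) ⬝ᵥ ψ j) = 1/k := by
      have h10 : ((∑ i, ∑ j, p i * p j * Complex.normSq (star (ψ i) ⬝ᵥ ψ j) : ℝ) : ℂ)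
          = (((1:ℝ)/k : ℝ) : ℂ) := by
        rw [← hdec2, htr2, ← hsq]
        push_cast
        ring
      exact_mod_cast h10
    set C : ℝ := ∑ i, ∑ j ∈ Finset.univ.erase i,
        p i * p j * Complex.normSq (star (ψ i) ⬝ᵥ ψ j) with hC
    have hsplit : ∑ i, (p i)^2 + C = 1/k := by
      rw [← hreal, hC, ← Finset.sum_add_distrib]
      refine Finset.sum_congr rfl fun i _ => ?_
      have hii : p i * p i * Complex.normSq (star (ψ i) ⬝ᵥ ψ i) = p i ^2 := by
        rw [hunit i]
        simp [pow_two]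
      rw [← Finset.add_sum_erase _ _ (Finset.mem_univ i), hii]
    have hCnn : 0 ≤ C := by
      refine Finset.sum_nonneg fun i _ => Finset.sum_nonneg fun j _ => ?_
      exact mul_nonneg (mul_nonneg (hp i).le (hp j).le)
        (Complex.normSq_nonneg (star (ψ i) ⬝ᵥ ψ j))
    have hqsum : ∑ i, (p i - 1/k)^2 = ∑ i, (p i)^2 - 1/k := by
      have hexp : ∀ i : Fin k, (p i - 1/k)^2 = p i^2 - (2/k) * p i + 1/k^2 :=
        fun i => by ring
      rw [Finset.sum_congr rfl fun i _ => hexp i]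
      rw [Finset.sum_add_distrib, Finset.sum_sub_distrib, ← Finset.mul_sum, hpsum,
        Finset.sum_const, Finset.card_univ, Fintype.card_fin, nsmul_eq_mul]
      field_simp
      ring
    have hq0 : ∑ i, (p i - 1/k)^2 = -C := by
      rw [hqsum]; linarith
    have hqnn : 0 ≤ ∑ i, (p i - 1/k)^2 :=
      Finset.sum_nonneg fun i _ => sq_nonneg _
    have hC0 : C = 0 := by linarith
    have hq00 : ∑ i : Fin k, (p i - 1/k)^2 = 0 := by rw [hq0, hC0, neg_zero]
    constructor
    · intro i j hij
      have hinner0 : ∑ j' ∈ Finset.univ.erase i,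
          p i * p j' * Complex.normSq (star (ψ i) ⬝ᵥ ψ j') = 0 := by
        refine (Finset.sum_eq_zero_iff_of_nonneg fun i' _ =>
          Finset.sum_nonneg fun j' _ => ?_).1 hC0.symm.symm i (Finset.mem_univ i)
        exact mul_nonneg (mul_nonneg (hp i').le (hp j').le)
          (Complex.normSq_nonneg (star (ψ i') ⬝ᵥ ψ j'))
      have hterm00 : p i * p j * Complex.normSq (star (ψ i) ⬝ᵥ ψ j) = 0 := by
        refine (Finset.sum_eq_zero_iff_of_nonneg fun j' _ => ?_).1 hinner0 j
          (Finset.mem_erase.2 ⟨hij.symm, Finset.mem_univ j⟩)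
        exact mul_nonneg (mul_nonneg (hp i).le (hp j').le)
          (Complex.normSq_nonneg (star (ψ i) ⬝ᵥ ψ j'))
      have hpij : p i * p j ≠ 0 := ne_of_gt (mul_pos (hp i) (hp j))
      have hns : Complex.normSq (star (ψ i) ⬝ᵥ ψ j) = 0 := by
        rcases mul_eq_zero.1 hterm00 with h | h
        · exact absurd h hpij
        · exact h
      exact Complex.normSq_eq_zero.mp hns
    · intro i
      have h11 := (Finset.sum_eq_zero_iff_of_nonneg fun i _ => sq_nonneg (p i - 1/k)).1
        hq00 i (Finset.mem_univ i)
      have := sq_eq_zero_iff.1 h11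
      linarith
  refine ⟨?_, hpart2⟩
  rintro ⟨i, j, hij, hnz⟩
  exact lt_of_le_of_ne hSle fun hEq => hnz ((hpart2 hEq).1 i j hij)
end

section
/- If ρ = (1/r) P where P is an orthogonal projection of rank r on H_A ⊗ H_B, and ρ admits a separable decomposition into exactly r product pure states, then those r product states form an orthonormal basis of the range of P. -/
open Matrix BigOperators
open scoped ComplexOrder

section Aux

variable {mA mB : Type*} [Fintype mA] [Fintype mB]

private lemma aux_kron_vecMulVec (a : mA → ℂ) (b : mB → ℂ) :
    Matrix.kroneckerMap (· * ·) (Matrix.vecMulVec a (star a)) (Matrix.vecMulVec b (star b))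
      = Matrix.vecMulVec (fun x : mA × mB => a x.1 * b x.2)
          (star fun x : mA × mB => a x.1 * b x.2) := by
  ext x y
  simp only [Matrix.kroneckerMap_apply, Matrix.vecMulVec_apply, Pi.star_apply, star_mul']
  ring

private lemma aux_vecMulVec_mulVec {n : Type*} [Fintype n] (a b w : n → ℂ) :
    (Matrix.vecMulVec a b).mulVec w = (b ⬝ᵥ w) • a := by
  funext x
  simp only [Matrix.mulVec, Matrix.vecMulVec_apply, dotProduct, Pi.smul_apply, smul_eq_mul,
    Finset.sum_mul]
  exact Finset.sum_congr rfl fun y _ => by ring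

private lemma aux_prod_dot (a c : mA → ℂ) (b d : mB → ℂ) :
    (fun x : mA × mB => a x.1 * b x.2) ⬝ᵥ (fun x : mA × mB => c x.1 * d x.2)
      = (a ⬝ᵥ c) * (b ⬝ᵥ d) := by
  simp only [dotProduct, Fintype.sum_prod_type, Finset.sum_mul, Finset.mul_sum]
  rw [Finset.sum_comm]
  exact Finset.sum_congr rfl (fun x _ => Finset.sum_congr rfl (fun y _ => by ring))

private lemma aux_star_dot {n : Type*} [Fintype n] (a b : n → ℂ) :
    star (star a ⬝ᵥ b) = star b ⬝ᵥ a := by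
  simp only [dotProduct, star_sum, Pi.star_apply, star_mul', star_star]
  exact Finset.sum_congr rfl fun x _ => by ring

/-- Key inequality: for a hermitian idempotent `P`, `⟪w, P w⟫ ≤ ⟪w, w⟫`. -/
private lemma aux_proj_le {n : Type*} [Fintype n] (P : Matrix n n ℂ)
    (hP : P.IsHermitian) (hidem : P * P = P) (w : n → ℂ) :
    star w ⬝ᵥ P.mulVec w ≤ star w ⬝ᵥ w := by
  have hsymm : ∀ a b : n → ℂ, star a ⬝ᵥ P.mulVec b = star (P.mulVec a) ⬝ᵥ b := by
    intro a b
    rw [Matrix.star_mulVec, hP.eq, Matrix.dotProduct_mulVec]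
  have key : star w ⬝ᵥ P.mulVec w = star (P.mulVec w) ⬝ᵥ (P.mulVec w) := by
    conv_lhs => rw [← hidem, ← Matrix.mulVec_mulVec]
    exact hsymm w (P.mulVec w)
  have expand : star (w - P.mulVec w) ⬝ᵥ (w - P.mulVec w)
      = star w ⬝ᵥ w - star w ⬝ᵥ P.mulVec w := by
    rw [star_sub, sub_dotProduct, dotProduct_sub, dotProduct_sub, ← hsymm w w, ← key]
    ring
  have hnn := dotProduct_star_self_nonneg (w - P.mulVec w)
  rw [expand] at hnn
  exact sub_nonneg.mp hnn

private lemma aux_sum_mulVec {n : Type*} [Fintype n] {k : ℕ} (M : Fin k → Matrix n n ℂ)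
    (w : n → ℂ) : (∑ i, M i).mulVec w = ∑ i, (M i).mulVec w := by
  funext x
  simp only [Matrix.mulVec, dotProduct, Finset.sum_apply, Matrix.sum_apply, Finset.sum_mul]
  exact Finset.sum_comm

private lemma aux_dot_sum {n : Type*} [Fintype n] {k : ℕ} (w : n → ℂ) (c : Fin k → ℂ)
    (f : Fin k → n → ℂ) : w ⬝ᵥ (∑ i, c i • f i) = ∑ i, c i * (w ⬝ᵥ f i) := by
  simp only [dotProduct, Finset.sum_apply, Pi.smul_apply, smul_eq_mul, Finset.mul_sum]
  rw [Finset.sum_comm]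
  exact Finset.sum_congr rfl fun i _ => Finset.sum_congr rfl fun x _ => by ring

end Aux

/-- If ρ = (1/r) P for an orthogonal projection P of rank r on
H_A ⊗ H_B, and ρ admits a separable decomposition into exactly r product pure
states, then those r product states form an orthonormal basis of the range of P. -/
theorem rank_decomposition_orthonormal {mA mB : Type*} [Fintype mA] [Fintype mB]
    [DecidableEq mA] [DecidableEq mB]
    (P : Matrix (mA × mB) (mA × mB) ℂ)
    (hP : P.IsHermitian) (hidem : P * P = P) (r : ℕ) (hrank : P.rank = r)
    (ρ : Matrix (mA × mB) (mA × mB) ℂ) (hρ : ρ = ((r : ℂ))⁻¹ • P)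
    (p : Fin r → ℝ) (α : Fin r → mA → ℂ) (β : Fin r → mB → ℂ)
    (hp : ∀ i, 0 < p i) (hpsum : ∑ i, p i = 1)
    (hα : ∀ i, star (α i) ⬝ᵥ α i = 1) (hβ : ∀ i, star (β i) ⬝ᵥ β i = 1)
    (hdec : ρ = ∑ i, (p i : ℂ) • Matrix.kroneckerMap (· * ·)
        (Matrix.vecMulVec (α i) (star (α i))) (Matrix.vecMulVec (β i) (star (β i)))) :
    (∀ i j, star (fun x : mA × mB => α i x.1 * β i x.2) ⬝ᵥ
        (fun x : mA × mB => α j x.1 * β j x.2) = if i = j then 1 else 0) ∧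
    Submodule.span ℂ (Set.range fun i => (fun x : mA × mB => α i x.1 * β i x.2))
      = LinearMap.range P.mulVecLin := by
  -- r is positive
  have hr0 : 0 < r := by
    rcases Nat.eq_zero_or_pos r with h | h
    · subst h; simp at hpsum
    · exact h
  have hrR : (0:ℝ) < (r:ℝ) := by exact_mod_cast hr0
  set v : Fin r → (mA × mB) → ℂ := fun i x => α i x.1 * β i x.2 with hv
  have hstarv : ∀ i, star (v i) = fun x : mA × mB => star (α i) x.1 * star (β i) x.2 := by
    intro i; funext x
    simp [hv, star_mul', mul_comm]
  set G : Fin r → Fin r → ℂ := fun i j => star (v i) ⬝ᵥ v j with hG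
  have hGfact : ∀ i j, G i j = (star (α i) ⬝ᵥ α j) * (star (β i) ⬝ᵥ β j) := by
    intro i j
    rw [hG]; dsimp only
    rw [hstarv i, hv]
    exact aux_prod_dot _ _ _ _
  have hGdiag : ∀ j, G j j = 1 := by
    intro j; rw [hGfact, hα, hβ, one_mul]
  have hGconj : ∀ i j, G j i = star (G i j) := fun i j => (aux_star_dot (v i) (v j)).symm
  -- rewrite ρ
  have hdec' : ρ = ∑ i, (p i : ℂ) • Matrix.vecMulVec (v i) (star (v i)) := by
    rw [hdec]
    exact Finset.sum_congr rfl fun i _ => by rw [aux_kron_vecMulVec]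
  -- ρ applied to v j
  have hρv : ∀ j, ρ.mulVec (v j) = ∑ i, ((p i : ℂ) * G i j) • v i := by
    intro j
    rw [hdec', aux_sum_mulVec]
    refine Finset.sum_congr rfl fun i _ => ?_
    rw [Matrix.smul_mulVec, aux_vecMulVec_mulVec, smul_smul]
  -- the quadratic form value
  have hquad : ∀ j, star (v j) ⬝ᵥ ρ.mulVec (v j)
      = ((∑ i, p i * Complex.normSq (G i j) : ℝ) : ℂ) := by
    intro j
    rw [hρv j, aux_dot_sum]
    push_cast
    refine Finset.sum_congr rfl fun i _ => ?_
    have hgi : star (v j) ⬝ᵥ v i = G j i := rfl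
    rw [hgi, hGconj i j, mul_assoc, Complex.star_def, Complex.mul_conj]
  -- the inequality
  have hineq : ∀ j, (∑ i, p i * Complex.normSq (G i j)) ≤ (r:ℝ)⁻¹ := by
    intro j
    have h1 : star (v j) ⬝ᵥ ρ.mulVec (v j) ≤ ((r:ℝ)⁻¹ : ℂ) := by
      rw [hρ]
      have hsm : ((r:ℂ)⁻¹ • P).mulVec (v j) = (r:ℂ)⁻¹ • P.mulVec (v j) :=
        Matrix.smul_mulVec _ _ _
      rw [hsm]
      have h2 : star (v j) ⬝ᵥ ((r:ℂ)⁻¹ • P.mulVec (v j))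
          = (r:ℂ)⁻¹ * (star (v j) ⬝ᵥ P.mulVec (v j)) := by
        rw [dotProduct_smul, smul_eq_mul]
      rw [h2]
      have h3 : star (v j) ⬝ᵥ P.mulVec (v j) ≤ star (v j) ⬝ᵥ v j :=
        aux_proj_le P hP hidem (v j)
      have h4 : (0:ℂ) ≤ (r:ℂ)⁻¹ := by
        rw [show ((r:ℂ))⁻¹ = (((r:ℝ)⁻¹ : ℝ) : ℂ) by push_cast; ring]
        rw [← Complex.ofReal_zero, Complex.real_le_real]
        positivity
      calc (r:ℂ)⁻¹ * (star (v j) ⬝ᵥ P.mulVec (v j))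
          ≤ (r:ℂ)⁻¹ * (star (v j) ⬝ᵥ v j) := mul_le_mul_of_nonneg_left h3 h4
        _ = ((r:ℝ)⁻¹ : ℂ) := by
            have : star (v j) ⬝ᵥ v j = G j j := rfl
            rw [this, hGdiag, mul_one]
            push_cast; ring
    rw [hquad j] at h1
    exact_mod_cast h1
  -- each diagonal dominates: ∑ i, p i * normSq (G i j) = p j + rest
  have hsplit : ∀ j, (∑ i, p i * Complex.normSq (G i j))
      = p j + ∑ i ∈ Finset.univ.erase j, p i * Complex.normSq (G i j) := by
    intro j
    rw [← Finset.add_sum_erase _ _ (Finset.mem_univ j), hGdiag]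
    norm_num
  have hrestnn : ∀ j, ∀ i ∈ Finset.univ.erase j,
      0 ≤ p i * Complex.normSq (G i j) := fun j i _ =>
    mul_nonneg (hp i).le (Complex.normSq_nonneg _)
  -- sum over j of the rest is ≤ 0
  have hsum_le : ∑ j, (∑ i ∈ Finset.univ.erase j, p i * Complex.normSq (G i j)) ≤ 0 := by
    have h1 : ∑ j, (p j + ∑ i ∈ Finset.univ.erase j, p i * Complex.normSq (G i j))
        ≤ ∑ _j : Fin r, (r:ℝ)⁻¹ :=
      Finset.sum_le_sum fun j _ => by rw [← hsplit j]; exact hineq j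
    rw [Finset.sum_add_distrib, hpsum] at h1
    simp only [Finset.sum_const, Finset.card_univ, Fintype.card_fin, nsmul_eq_mul] at h1
    rw [mul_inv_cancel₀ (ne_of_gt hrR)] at h1
    linarith
  have hrest0 : ∀ j, ∑ i ∈ Finset.univ.erase j, p i * Complex.normSq (G i j) = 0 := by
    have hnn : ∀ j ∈ Finset.univ, (0:ℝ) ≤ ∑ i ∈ Finset.univ.erase j,
        p i * Complex.normSq (G i j) := fun j _ => Finset.sum_nonneg (hrestnn j)
    have := le_antisymm hsum_le (Finset.sum_nonneg hnn)
    intro j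
    exact (Finset.sum_eq_zero_iff_of_nonneg hnn).mp this j (Finset.mem_univ j)
  -- orthogonality
  have horth : ∀ i j, i ≠ j → G i j = 0 := by
    intro i j hij
    have hi : i ∈ Finset.univ.erase j := Finset.mem_erase.mpr ⟨hij, Finset.mem_univ i⟩
    have := (Finset.sum_eq_zero_iff_of_nonneg (hrestnn j)).mp (hrest0 j) i hi
    have hnsq : Complex.normSq (G i j) = 0 := by
      rcases mul_eq_zero.mp this with h | h
      · exact absurd h (ne_of_gt (hp i))
      · exact h
    exact Complex.normSq_eq_zero.mp hnsq
  have hGfull : ∀ i j, G i j = if i = j then 1 else 0 := by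
    intro i j
    by_cases h : i = j
    · subst h; simp [hGdiag]
    · simp [h, horth i j h]
  refine ⟨hGfull, ?_⟩
  -- p j = 1/r
  have hpval : ∀ j, p j = (r:ℝ)⁻¹ := by
    have hle : ∀ j, p j ≤ (r:ℝ)⁻¹ := by
      intro j
      have := hineq j
      rw [hsplit j, hrest0 j, add_zero] at this
      exact this
    by_contra h
    push_neg at h
    obtain ⟨j, hj⟩ := h
    have hlt : p j < (r:ℝ)⁻¹ := lt_of_le_of_ne (hle j) hj
    have : (∑ i, p i) < ∑ _i : Fin r, (r:ℝ)⁻¹ :=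
      Finset.sum_lt_sum (fun i _ => hle i) ⟨j, Finset.mem_univ j, hlt⟩
    rw [hpsum] at this
    simp only [Finset.sum_const, Finset.card_univ, Fintype.card_fin, nsmul_eq_mul] at this
    rw [mul_inv_cancel₀ (ne_of_gt hrR)] at this
    exact lt_irrefl _ this
  -- P fixes each v j
  have hPv : ∀ j, P.mulVec (v j) = v j := by
    intro j
    have hρvj : ρ.mulVec (v j) = (p j : ℂ) • v j := by
      rw [hρv j]
      rw [Finset.sum_eq_single j]
      · rw [hGdiag, mul_one]
      · intro i _ hij
        rw [horth i j hij, mul_zero, zero_smul]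
      · intro h; exact absurd (Finset.mem_univ j) h
    have hPρ : P = (r:ℂ) • ρ := by
      rw [hρ, smul_smul, mul_inv_cancel₀ (by exact_mod_cast hr0.ne'), one_smul]
    rw [hPρ, Matrix.smul_mulVec, hρvj, smul_smul, hpval j]
    rw [show ((r:ℂ)) * (((r:ℝ)⁻¹ : ℝ) : ℂ) = 1 by
      push_cast
      field_simp]
    rw [one_smul]
  -- span ≤ range
  have hle : Submodule.span ℂ (Set.range v) ≤ LinearMap.range P.mulVecLin := by
    rw [Submodule.span_le]
    rintro _ ⟨j, rfl⟩
    exact ⟨v j, by rw [Matrix.mulVecLin_apply, hPv j]⟩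
  -- linear independence
  have hli : LinearIndependent ℂ v := by
    rw [Fintype.linearIndependent_iff]
    intro c hc j
    have h1 : star (v j) ⬝ᵥ (∑ i, c i • v i) = star (v j) ⬝ᵥ (0 : (mA × mB) → ℂ) := by
      rw [hc]
    have h2 : star (v j) ⬝ᵥ (∑ i, c i • v i) = ∑ i, c i * G j i :=
      aux_dot_sum _ _ _
    rw [h2] at h1
    simp only [dotProduct, Pi.zero_apply, mul_zero, Finset.sum_const_zero] at h1
    rw [Finset.sum_eq_single j] at h1
    · rw [hGdiag, mul_one] at h1; exact h1
    · intro i _ hij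
      rw [horth j i (Ne.symm hij), mul_zero]
    · intro h; exact absurd (Finset.mem_univ j) h
  -- dimensions
  have hfin1 : Module.finrank ℂ (Submodule.span ℂ (Set.range v)) = r := by
    rw [finrank_span_eq_card hli, Fintype.card_fin]
  have hfin2 : Module.finrank ℂ (LinearMap.range P.mulVecLin) = r := hrank
  exact Submodule.eq_of_le_of_finrank_le hle (by rw [hfin1, hfin2])
end

section
/- Let S = {|α_i⟩⊗|β_i⟩}_{i=1}^{|S|} be an orthonormal set of product vectors in H = H_A ⊗ H_B that is uncompletable in H (cannot be extended to a full orthonormal product basis of H) but completable in some local extension H' = (H_A ⊕ H'_A) ⊗ (H_B ⊕ H'_B). Then the state ρ_S = (1/(dim H − |S|))(1_H − Σ_i |α_i⟩⟨α_i| ⊗ |β_i⟩⟨β_i|) is separable, and every separable decomposition of ρ_S requires strictly more than rank(ρ_S) = dim H − |S| product pure states. -/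
open Matrix BigOperators
open scoped ComplexOrder


/-- The family of product vectors `α_i ⊗ β_i`, together with `t` further product
vectors, forms an orthonormal (product) basis of A ⊗ B; i.e. the orthonormal product
set is completable to a full orthonormal product basis. -/
def CompletableIn {A B : Type*} [Fintype A] [Fintype B] {s : ℕ}
    (α : Fin s → A → ℂ) (β : Fin s → B → ℂ) : Prop :=
  ∃ (t : ℕ) (α' : Fin t → A → ℂ) (β' : Fin t → B → ℂ),
    s + t = Fintype.card A * Fintype.card B ∧
    (∀ u v : Fin s ⊕ Fin t,
      star (Sum.elim (fun i (x : A × B) => α i x.1 * β i x.2)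
              (fun i (x : A × B) => α' i x.1 * β' i x.2) u) ⬝ᵥ
        (Sum.elim (fun i (x : A × B) => α i x.1 * β i x.2)
              (fun i (x : A × B) => α' i x.1 * β' i x.2) v)
        = if u = v then 1 else 0)


/-- Completeness relation from a full-cardinality orthonormal family. -/
lemma onb_complete {ι X : Type*} [Fintype ι] [Fintype X] [DecidableEq ι] [DecidableEq X]
    (V : ι → X → ℂ) (hcard : Fintype.card ι = Fintype.card X)
    (h : ∀ u v, star (V u) ⬝ᵥ V v = if u = v then 1 else 0) (x y : X) :
    ∑ u, V u x * star (V u y) = if x = y then 1 else 0 := by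
  classical
  obtain e : X ≃ ι := Fintype.equivOfCardEq hcard.symm
  set B : Matrix X X ℂ := fun x z => V (e z) x with hB
  have hG : Bᴴ * B = 1 := by
    ext z z'
    have := h (e z) (e z')
    simp only [dotProduct, Pi.star_apply] at this
    simp only [Matrix.mul_apply, Matrix.conjTranspose_apply, Matrix.one_apply,
      EmbeddingLike.apply_eq_iff_eq] at *
    simp only [hB]
    simpa using this
  have hG' : B * Bᴴ = 1 := mul_eq_one_comm.mpr hG
  have := congrFun (congrFun hG' x) y
  simp only [Matrix.mul_apply, Matrix.conjTranspose_apply, Matrix.one_apply] at this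
  simp only [hB] at this
  rw [← this, ← Equiv.sum_comp e (fun u => V u x * star (V u y))]

/-- Orthonormality (Gram = id) from a completeness relation for a full-cardinality family. -/
lemma complete_gram {ι X : Type*} [Fintype ι] [Fintype X] [DecidableEq ι] [DecidableEq X]
    (V : ι → X → ℂ) (hcard : Fintype.card ι = Fintype.card X)
    (h : ∀ x y, ∑ u, V u x * star (V u y) = if x = y then 1 else 0) (u v : ι) :
    star (V u) ⬝ᵥ V v = if u = v then 1 else 0 := by
  classical
  obtain e : X ≃ ι := Fintype.equivOfCardEq hcard.symm
  set B : Matrix X X ℂ := fun x z => V (e z) x with hB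
  have hG' : B * Bᴴ = 1 := by
    ext x y
    have := h x y
    rw [← Equiv.sum_comp e (fun u => V u x * star (V u y))] at this
    simp only [Matrix.mul_apply, Matrix.conjTranspose_apply, Matrix.one_apply]
    simpa [hB] using this
  have hG : Bᴴ * B = 1 := mul_eq_one_comm.mp hG'
  have := congrFun (congrFun hG (e.symm u)) (e.symm v)
  simp only [Matrix.mul_apply, Matrix.conjTranspose_apply, Matrix.one_apply,
    Equiv.apply_symm_apply, EmbeddingLike.apply_eq_iff_eq] at this
  simp only [hB, Equiv.apply_symm_apply] at this
  simpa [dotProduct, Pi.star_apply] using this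

lemma card_le_of_right_inverse {ι X : Type*} [Fintype ι] [Fintype X] [DecidableEq X]
    (B : Matrix X ι ℂ) (C : Matrix ι X ℂ) (h : B * C = 1) :
    Fintype.card X ≤ Fintype.card ι := by
  calc Fintype.card X = (1 : Matrix X X ℂ).rank := Matrix.rank_one.symm
    _ = (B * C).rank := by rw [h]
    _ ≤ B.rank := Matrix.rank_mul_le_left B C
    _ ≤ Fintype.card ι := Matrix.rank_le_card_width B

lemma dot_prod_factor {A B : Type*} [Fintype A] [Fintype B]
    (f g : A → ℂ) (f' g' : B → ℂ) :
    star (fun x : A × B => f x.1 * f' x.2) ⬝ᵥ (fun x : A × B => g x.1 * g' x.2)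
      = (star f ⬝ᵥ g) * (star f' ⬝ᵥ g') := by
  simp only [dotProduct, Pi.star_apply, Fintype.sum_prod_type, Finset.sum_mul, Finset.mul_sum]
  rw [Finset.sum_comm]
  apply Finset.sum_congr rfl; intro a _
  apply Finset.sum_congr rfl; intro b _
  simp [star_mul']
  ring

lemma norm_scaled {X : Type*} [Fintype X] (f : X → ℂ) (r : ℝ) (hnn : 0 ≤ r)
    (hr : r = ∑ x, Complex.normSq (f x)) (hr0 : r ≠ 0) :
    star (fun x => (((Real.sqrt r)⁻¹ : ℝ) : ℂ) * f x) ⬝ᵥ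
      (fun x => (((Real.sqrt r)⁻¹ : ℝ) : ℂ) * f x) = 1 := by
  have hAA : ((Real.sqrt r : ℂ))⁻¹ * ((Real.sqrt r : ℂ))⁻¹ = ((r : ℂ))⁻¹ := by
    rw [← mul_inv]
    norm_cast
    rw [Real.mul_self_sqrt hnn]
  have hsum : ∑ x, (starRingEnd ℂ) (f x) * f x = ((r : ℝ) : ℂ) := by
    rw [hr]
    push_cast
    exact Finset.sum_congr rfl fun x _ => (Complex.normSq_eq_conj_mul_self).symm ▸ rfl
  have hr0' : ((r : ℂ)) ≠ 0 := by exact_mod_cast hr0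
  simp only [dotProduct, Pi.star_apply, star_mul', Complex.star_def, Complex.conj_ofReal]
  push_cast
  calc ∑ x, ((Real.sqrt r : ℂ))⁻¹ * (starRingEnd ℂ) (f x) * (((Real.sqrt r : ℂ))⁻¹ * f x)
      = (((Real.sqrt r : ℂ))⁻¹ * ((Real.sqrt r : ℂ))⁻¹) * ∑ x, (starRingEnd ℂ) (f x) * f x := by
        rw [Finset.mul_sum]
        exact Finset.sum_congr rfl fun x _ => by ring
    _ = 1 := by
        rw [hAA, hsum]
        exact inv_mul_cancel₀ hr0'

set_option maxHeartbeats 1000000 in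
/-- Let S = {α_i ⊗ β_i} be an orthonormal set of product vectors in
H = H_A ⊗ H_B that is uncompletable in H but completable in some local extension
H' = (H_A ⊕ H'_A) ⊗ (H_B ⊕ H'_B).  Then ρ_S, the normalized projection onto the
orthogonal complement of span S, is separable, and every separable decomposition of
ρ_S requires strictly more than rank(ρ_S) = dim H − |S| product pure states. -/
theorem uncompletable_forces_large_ensemble
    {mA mB aE bE : Type*} [Fintype mA] [Fintype mB] [Fintype aE] [Fintype bE]
    [DecidableEq mA] [DecidableEq mB]
    (s : ℕ) (α : Fin s → mA → ℂ) (β : Fin s → mB → ℂ)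
    (horth : ∀ i j, star (fun x : mA × mB => α i x.1 * β i x.2) ⬝ᵥ
        (fun x : mA × mB => α j x.1 * β j x.2) = if i = j then 1 else 0)
    (huncomp : ¬ CompletableIn α β)
    (hcomp : CompletableIn (fun i => Sum.elim (α i) (0 : aE → ℂ))
        (fun i => Sum.elim (β i) (0 : bE → ℂ)))
    (ρS : Matrix (mA × mB) (mA × mB) ℂ)
    (hρS : ρS = ((Fintype.card mA * Fintype.card mB - s : ℕ) : ℂ)⁻¹ •
        ((1 : Matrix (mA × mB) (mA × mB) ℂ) -
          ∑ i, Matrix.kroneckerMap (· * ·)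
            (Matrix.vecMulVec (α i) (star (α i)))
            (Matrix.vecMulVec (β i) (star (β i))))) :
    Separable ρS ∧
      ∀ k, SepDecomp ρS k → Fintype.card mA * Fintype.card mB - s < k := by
  classical
  set n := Fintype.card mA * Fintype.card mB with hn
  have hcardX : Fintype.card (mA × mB) = n := Fintype.card_prod _ _
  set v : Fin s → (mA × mB) → ℂ := fun i x => α i x.1 * β i x.2 with hv
  have horthv : ∀ i j, star (v i) ⬝ᵥ v j = if i = j then 1 else 0 := horth
  -- s ≤ n
  have hsle : s ≤ n := by
    have h1 : (Matrix.of (fun i x => star (v i x)) : Matrix (Fin s) (mA × mB) ℂ) *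
        (Matrix.of fun x i => v i x) = 1 := by
      ext i j
      have := horthv i j
      simpa [Matrix.mul_apply, dotProduct, Matrix.one_apply] using this
    have := card_le_of_right_inverse _ _ h1
    simpa [hcardX] using this
  have hsne : s ≠ n := by
    intro hsn
    apply huncomp
    refine ⟨0, (fun j => j.elim0), (fun j => j.elim0), by simpa using hsn, ?_⟩
    rintro (i | j) (i' | j')
    · simpa using horth i i'
    · exact j'.elim0
    · exact j.elim0
    · exact j.elim0
  have hslt : s < n := lt_of_le_of_ne hsle hsne
  have hcC : ((n - s : ℕ) : ℂ) ≠ 0 := Nat.cast_ne_zero.mpr (by omega)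
  -- kronecker entries
  have hQ : ∀ (i : Fin s) (x y : mA × mB),
      (Matrix.kroneckerMap (· * ·) (Matrix.vecMulVec (α i) (star (α i)))
        (Matrix.vecMulVec (β i) (star (β i)))) x y = v i x * star (v i y) := by
    intro i x y
    simp only [Matrix.kroneckerMap_apply, Matrix.vecMulVec_apply, Pi.star_apply, hv, star_mul']
    ring
  -- entry formula for kronecker of outer products
  have hK : ∀ (f : mA → ℂ) (g : mB → ℂ) (x y : mA × mB),
      (Matrix.kroneckerMap (· * ·) (Matrix.vecMulVec f (star f))
        (Matrix.vecMulVec g (star g))) x y = (f x.1 * g x.2) * star (f y.1 * g y.2) := by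
    intro f g x y
    simp only [Matrix.kroneckerMap_apply, Matrix.vecMulVec_apply, Pi.star_apply, star_mul']
    ring
  -- unpack the completion in the extension
  obtain ⟨t, α', β', hst, horthB⟩ := hcomp
  set a : Fin t → mA → ℂ := fun j x => α' j (Sum.inl x) with ha
  set b : Fin t → mB → ℂ := fun j x => β' j (Sum.inl x) with hb
  set w : Fin t → (mA × mB) → ℂ := fun j x => a j x.1 * b j x.2 with hw
  have hres : ∀ x y : mA × mB,
      (∑ i, v i x * star (v i y)) + (∑ j, w j x * star (w j y))
        = if x = y then 1 else 0 := by
    intro x y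
    have hcardBig : Fintype.card (Fin s ⊕ Fin t)
        = Fintype.card ((mA ⊕ aE) × (mB ⊕ bE)) := by
      simp only [Fintype.card_sum, Fintype.card_fin, Fintype.card_prod] at hst ⊢
      exact hst
    have hbig := onb_complete _ hcardBig horthB
      (Sum.inl x.1, Sum.inl x.2) (Sum.inl y.1, Sum.inl y.2)
    rw [Fintype.sum_sum_type] at hbig
    have hif : (((Sum.inl x.1 : mA ⊕ aE), (Sum.inl x.2 : mB ⊕ bE))
        = ((Sum.inl y.1 : mA ⊕ aE), (Sum.inl y.2 : mB ⊕ bE))) ↔ x = y := by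
      constructor
      · intro h
        rw [Prod.ext_iff] at h ⊢
        exact ⟨Sum.inl.inj h.1, Sum.inl.inj h.2⟩
      · rintro rfl; rfl
    rw [if_congr hif rfl rfl] at hbig
    refine Eq.trans ?_ hbig
    exact congrArg₂ (· + ·) (Finset.sum_congr rfl fun i _ => rfl)
      (Finset.sum_congr rfl fun j _ => rfl)
  have hresC : ∀ x y, ρS x y = ((n - s : ℕ) : ℂ)⁻¹ * ∑ j, w j x * star (w j y) := by
    intro x y
    rw [hρS]
    simp only [Matrix.smul_apply, Matrix.sub_apply, Matrix.sum_apply, smul_eq_mul, hQ]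
    congr 1
    rw [Matrix.one_apply]
    linear_combination -hres x y
  -- norms
  set rA : Fin t → ℝ := fun j => ∑ x, Complex.normSq (a j x) with hrA
  set rB : Fin t → ℝ := fun j => ∑ x, Complex.normSq (b j x) with hrB
  have hrAnn : ∀ j, 0 ≤ rA j := fun j => Finset.sum_nonneg fun x _ => Complex.normSq_nonneg _
  have hrBnn : ∀ j, 0 ≤ rB j := fun j => Finset.sum_nonneg fun x _ => Complex.normSq_nonneg _
  have hAzero : ∀ j, rA j = 0 → ∀ x, a j x = 0 := by
    intro j h x
    exact Complex.normSq_eq_zero.mp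
      ((Finset.sum_eq_zero_iff_of_nonneg (fun x _ => Complex.normSq_nonneg _)).mp h x
        (Finset.mem_univ x))
  have hBzero : ∀ j, rB j = 0 → ∀ x, b j x = 0 := by
    intro j h x
    exact Complex.normSq_eq_zero.mp
      ((Finset.sum_eq_zero_iff_of_nonneg (fun x _ => Complex.normSq_nonneg _)).mp h x
        (Finset.mem_univ x))
  have hwns : ∀ j (x : mA × mB), w j x * star (w j x)
      = ((Complex.normSq (a j x.1) * Complex.normSq (b j x.2) : ℝ) : ℂ) := by
    intro j x
    have hwd : w j x = a j x.1 * b j x.2 := rfl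
    rw [hwd, Complex.star_def, Complex.mul_conj, Complex.normSq_mul]
  have hdotw : ∀ j, (∑ x : mA × mB, w j x * star (w j x)) = ((rA j * rB j : ℝ) : ℂ) := by
    intro j
    simp only [hwns, hrA, hrB]
    push_cast
    rw [Fintype.sum_prod_type, Finset.sum_mul_sum]
  have hvnorm : ∀ i, ∑ x, v i x * star (v i x) = 1 := by
    intro i
    have h := horthv i i
    rw [if_pos rfl] at h
    rw [← h]
    simp only [dotProduct, Pi.star_apply]
    exact Finset.sum_congr rfl fun x _ => mul_comm _ _
  have htrC : (∑ j, ((rA j * rB j : ℝ) : ℂ)) = ((n - s : ℕ) : ℂ) := by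
    have h1 : ∑ x : mA × mB,
        ((∑ i, v i x * star (v i x)) + (∑ j, w j x * star (w j x))) = (n : ℂ) := by
      have h2 : ∀ x : mA × mB,
          ((∑ i, v i x * star (v i x)) + (∑ j, w j x * star (w j x))) = 1 := by
        intro x
        rw [hres x x, if_pos rfl]
      simp only [h2]
      simp [hcardX]
    rw [Finset.sum_add_distrib] at h1
    have h2 : ∑ x : mA × mB, ∑ i, v i x * star (v i x) = (s : ℂ) := by
      rw [Finset.sum_comm, Finset.sum_congr rfl (fun i _ => hvnorm i)]
      simp
    have h3 : ∑ x : mA × mB, ∑ j, w j x * star (w j x) = ∑ j, ((rA j * rB j : ℝ) : ℂ) := by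
      rw [Finset.sum_comm]
      exact Finset.sum_congr rfl fun j _ => hdotw j
    rw [h2, h3] at h1
    rw [Nat.cast_sub hsle]
    linear_combination h1
  have htr : (∑ j, rA j * rB j) = ((n - s : ℕ) : ℝ) := by
    exact_mod_cast htrC
  -- the index set of nonvanishing restrictions
  set J : Finset (Fin t) := Finset.univ.filter (fun j => rA j ≠ 0 ∧ rB j ≠ 0) with hJ
  set k₀ := J.card with hk₀
  set σ : Fin k₀ ≃ {x // x ∈ J} := J.equivFin.symm with hσ
  have hmem : ∀ i : Fin k₀, rA ((σ i : Fin t)) ≠ 0 ∧ rB ((σ i : Fin t)) ≠ 0 := by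
    intro i
    exact (Finset.mem_filter.mp (σ i).2).2
  have hoffJ : ∀ j : Fin t, j ∉ J → (rA j = 0 ∨ rB j = 0) := by
    intro j h
    by_contra hc
    push_neg at hc
    exact h (Finset.mem_filter.mpr ⟨Finset.mem_univ j, hc⟩)
  set cR : ℝ := ((n - s : ℕ) : ℝ) with hcR
  have hcRpos : 0 < cR := by
    rw [hcR]
    exact_mod_cast Nat.pos_of_ne_zero (by omega)
  set pP : Fin k₀ → ℝ := fun i => rA ((σ i : Fin t)) * rB ((σ i : Fin t)) / cR with hpP
  set ψP : Fin k₀ → mA → ℂ :=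
    fun i z => (((Real.sqrt (rA ((σ i : Fin t))))⁻¹ : ℝ) : ℂ) * a ((σ i : Fin t)) z with hψP
  set φP : Fin k₀ → mB → ℂ :=
    fun i z => (((Real.sqrt (rB ((σ i : Fin t))))⁻¹ : ℝ) : ℂ) * b ((σ i : Fin t)) z with hφP
  have hppos : ∀ i, 0 < pP i := by
    intro i
    obtain ⟨h1, h2⟩ := hmem i
    exact div_pos (mul_pos (lt_of_le_of_ne (hrAnn _) (Ne.symm h1))
      (lt_of_le_of_ne (hrBnn _) (Ne.symm h2))) hcRpos
  have hpsum : ∑ i, pP i = 1 := by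
    rw [hpP]
    have : ∑ i : Fin k₀, rA ((σ i : Fin t)) * rB ((σ i : Fin t)) = cR := by
      rw [Equiv.sum_comp σ (fun j : {x // x ∈ J} => rA (j : Fin t) * rB (j : Fin t)),
        Finset.sum_coe_sort J (fun j => rA j * rB j)]
      rw [← htr]
      apply Finset.sum_subset (Finset.subset_univ J)
      intro j _ hj
      rcases hoffJ j hj with h | h <;> rw [h] <;> ring
    simp only [div_eq_mul_inv, ← Finset.sum_mul, this]
    exact mul_inv_cancel₀ (ne_of_gt hcRpos)
  have hψnorm : ∀ i, star (ψP i) ⬝ᵥ ψP i = 1 := by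
    intro i
    exact norm_scaled (a _) (rA _) (hrAnn _) rfl (hmem i).1
  have hφnorm : ∀ i, star (φP i) ⬝ᵥ φP i = 1 := by
    intro i
    exact norm_scaled (b _) (rB _) (hrBnn _) rfl (hmem i).2
  have hmatP : ρS = ∑ i, (pP i : ℂ) • Matrix.kroneckerMap (· * ·)
      (Matrix.vecMulVec (ψP i) (star (ψP i))) (Matrix.vecMulVec (φP i) (star (φP i))) := by
    ext x y
    rw [hresC x y]
    rw [Matrix.sum_apply]
    simp only [Matrix.smul_apply, hK, smul_eq_mul]
    have hterm : ∀ i : Fin k₀,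
        (pP i : ℂ) * ((ψP i x.1 * φP i x.2) * star (ψP i y.1 * φP i y.2))
          = ((n - s : ℕ) : ℂ)⁻¹ * (w ((σ i : Fin t)) x * star (w ((σ i : Fin t)) y)) := by
      intro i
      obtain ⟨hA0, hB0⟩ := hmem i
      have hAA : ((Real.sqrt (rA ((σ i : Fin t))) : ℂ))⁻¹ *
          ((Real.sqrt (rA ((σ i : Fin t))) : ℂ))⁻¹ = ((rA ((σ i : Fin t)) : ℂ))⁻¹ := by
        rw [← mul_inv]
        norm_cast
        rw [Real.mul_self_sqrt (hrAnn _)]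
      have hBB : ((Real.sqrt (rB ((σ i : Fin t))) : ℂ))⁻¹ *
          ((Real.sqrt (rB ((σ i : Fin t))) : ℂ))⁻¹ = ((rB ((σ i : Fin t)) : ℂ))⁻¹ := by
        rw [← mul_inv]
        norm_cast
        rw [Real.mul_self_sqrt (hrBnn _)]
      have hA0' : ((rA ((σ i : Fin t)) : ℂ)) ≠ 0 := by exact_mod_cast hA0
      have hB0' : ((rB ((σ i : Fin t)) : ℂ)) ≠ 0 := by exact_mod_cast hB0
      have key : ((rA ((σ i : Fin t)) : ℂ)) * ((rB ((σ i : Fin t)) : ℂ)) / ((n - s : ℕ) : ℂ) *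
          (((Real.sqrt (rA ((σ i : Fin t))) : ℂ))⁻¹ * ((Real.sqrt (rA ((σ i : Fin t))) : ℂ))⁻¹ *
           (((Real.sqrt (rB ((σ i : Fin t))) : ℂ))⁻¹ * ((Real.sqrt (rB ((σ i : Fin t))) : ℂ))⁻¹))
          = ((n - s : ℕ) : ℂ)⁻¹ := by
        rw [hAA, hBB, div_mul_eq_mul_div, mul_mul_mul_comm,
          mul_inv_cancel₀ hA0', mul_inv_cancel₀ hB0', one_mul, one_div]
      simp only [hpP, hψP, hφP, hw, hcR, star_mul', Complex.star_def, _root_.map_mul, Complex.conj_ofReal]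
      push_cast
      linear_combination (a ((σ i : Fin t)) x.1 * b ((σ i : Fin t)) x.2 *
        (starRingEnd ℂ) (a ((σ i : Fin t)) y.1) * (starRingEnd ℂ) (b ((σ i : Fin t)) y.2)) * key
    rw [Finset.sum_congr rfl (fun i _ => hterm i)]
    rw [Equiv.sum_comp σ (fun j : {x // x ∈ J} =>
      ((n - s : ℕ) : ℂ)⁻¹ * (w (j : Fin t) x * star (w (j : Fin t) y)))]
    rw [Finset.sum_coe_sort J (fun j => ((n - s : ℕ) : ℂ)⁻¹ * (w j x * star (w j y)))]
    rw [Finset.mul_sum]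
    symm
    apply Finset.sum_subset (Finset.subset_univ J)
    intro j _ hj
    have : w j x = 0 := by
      rcases hoffJ j hj with h | h
      · show a j x.1 * b j x.2 = 0
        rw [hAzero j h x.1, zero_mul]
      · show a j x.1 * b j x.2 = 0
        rw [hBzero j h x.2, mul_zero]
    rw [this, zero_mul, mul_zero]
  constructor
  · exact ⟨k₀, pP, ψP, φP, hppos, hpsum, hψnorm, hφnorm, hmatP⟩
  · intro k hdec
    by_contra hk
    push_neg at hk
    obtain ⟨p, ψ, φ, hp, hsum1, hψn, hφn, hmat⟩ := hdec
    have hM : (1 : Matrix (mA × mB) (mA × mB) ℂ) -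
        (∑ i, Matrix.kroneckerMap (· * ·) (Matrix.vecMulVec (α i) (star (α i)))
          (Matrix.vecMulVec (β i) (star (β i))))
        = ((n - s : ℕ) : ℂ) • ∑ j, (p j : ℂ) • Matrix.kroneckerMap (· * ·)
            (Matrix.vecMulVec (ψ j) (star (ψ j))) (Matrix.vecMulVec (φ j) (star (φ j))) := by
      have h := hρS.symm.trans hmat
      rwa [inv_smul_eq_iff₀ hcC] at h
    have hfull : ∀ x y : mA × mB, (∑ i, v i x * star (v i y)) +
        (∑ j, ((((n - s : ℕ) : ℝ) * p j : ℝ) : ℂ) *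
          ((ψ j x.1 * φ j x.2) * star (ψ j y.1 * φ j y.2))) = if x = y then 1 else 0 := by
      intro x y
      have h := congrFun (congrFun hM x) y
      simp only [Matrix.sub_apply, Matrix.smul_apply, Matrix.sum_apply, smul_eq_mul,
        hQ, hK] at h
      rw [Matrix.one_apply] at h
      have h2 : ((n - s : ℕ) : ℂ) * (∑ j, (p j : ℂ) *
            ((ψ j x.1 * φ j x.2) * star (ψ j y.1 * φ j y.2)))
          = ∑ j, ((((n - s : ℕ) : ℝ) * p j : ℝ) : ℂ) *
            ((ψ j x.1 * φ j x.2) * star (ψ j y.1 * φ j y.2)) := by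
        rw [Finset.mul_sum]
        exact Finset.sum_congr rfl fun j _ => by push_cast; ring
      linear_combination (-1 : ℂ) * h + (-1 : ℂ) * h2
    set qq : Fin s ⊕ Fin k → ℝ :=
      Sum.elim (fun _ => 1) (fun j => ((n - s : ℕ) : ℝ) * p j) with hqq
    set EE : Fin s ⊕ Fin k → (mA × mB) → ℂ :=
      Sum.elim v (fun j x => ψ j x.1 * φ j x.2) with hEE
    set V2 : Fin s ⊕ Fin k → (mA × mB) → ℂ :=
      fun z x => ((Real.sqrt (qq z) : ℝ) : ℂ) * EE z x with hV2
    have hqpos : ∀ z, 0 < qq z := by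
      rintro (i | j)
      · exact one_pos
      · exact mul_pos (by exact_mod_cast Nat.pos_of_ne_zero (by omega)) (hp j)
    have hcomp2 : ∀ x y : mA × mB,
        (∑ z, V2 z x * star (V2 z y)) = if x = y then 1 else 0 := by
      intro x y
      rw [Fintype.sum_sum_type]
      have e1 : ∀ i : Fin s, V2 (Sum.inl i) x * star (V2 (Sum.inl i) y)
          = v i x * star (v i y) := by
        intro i
        simp [hV2, hqq, hEE, Real.sqrt_one]
      have e2 : ∀ j : Fin k, V2 (Sum.inr j) x * star (V2 (Sum.inr j) y)
          = ((((n - s : ℕ) : ℝ) * p j : ℝ) : ℂ) *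
              ((ψ j x.1 * φ j x.2) * star (ψ j y.1 * φ j y.2)) := by
        intro j
        have hss : ((Real.sqrt (qq (Sum.inr j)) : ℝ) : ℂ) *
            ((Real.sqrt (qq (Sum.inr j)) : ℝ) : ℂ) = ((qq (Sum.inr j) : ℝ) : ℂ) := by
          norm_cast
          exact Real.mul_self_sqrt (le_of_lt (hqpos _))
        calc V2 (Sum.inr j) x * star (V2 (Sum.inr j) y)
            = (((Real.sqrt (qq (Sum.inr j)) : ℝ) : ℂ) * ((Real.sqrt (qq (Sum.inr j)) : ℝ) : ℂ)) *
              (EE (Sum.inr j) x * star (EE (Sum.inr j) y)) := by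
              simp only [hV2, star_mul', Complex.star_def, Complex.conj_ofReal]
              ring
          _ = ((((n - s : ℕ) : ℝ) * p j : ℝ) : ℂ) *
              ((ψ j x.1 * φ j x.2) * star (ψ j y.1 * φ j y.2)) := by
              rw [hss]
              rfl
      rw [Finset.sum_congr rfl fun i _ => e1 i, Finset.sum_congr rfl fun j _ => e2 j]
      exact hfull x y
    have hBmul : (Matrix.of fun (x : mA × mB) z => V2 z x) *
        (Matrix.of fun z (x : mA × mB) => star (V2 z x)) = 1 := by
      ext x y
      rw [Matrix.mul_apply, Matrix.one_apply]
      simpa using hcomp2 x y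
    have hnle : n ≤ s + k := by
      have h := card_le_of_right_inverse _ _ hBmul
      simpa [hcardX, Fintype.card_sum] using h
    have hksn : s + k = n := by omega
    have hcard2 : Fintype.card (Fin s ⊕ Fin k) = Fintype.card (mA × mB) := by
      simp only [Fintype.card_sum, Fintype.card_fin, hcardX]
      omega
    have hEnorm : ∀ z, star (EE z) ⬝ᵥ EE z = 1 := by
      rintro (i | j)
      · have h := horthv i i
        rw [if_pos rfl] at h
        exact h
      · calc star (EE (Sum.inr j)) ⬝ᵥ EE (Sum.inr j)
            = (star (ψ j) ⬝ᵥ ψ j) * (star (φ j) ⬝ᵥ φ j) := dot_prod_factor _ _ _ _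
          _ = 1 := by rw [hψn j, hφn j, one_mul]
    have hfact : ∀ z z', star (V2 z) ⬝ᵥ V2 z'
        = (((Real.sqrt (qq z) : ℝ) : ℂ) * ((Real.sqrt (qq z') : ℝ) : ℂ)) *
          (star (EE z) ⬝ᵥ EE z') := by
      intro z z'
      simp only [dotProduct, Pi.star_apply, hV2, star_mul', Complex.star_def,
        Complex.conj_ofReal, Finset.mul_sum]
      exact Finset.sum_congr rfl fun x _ => by ring
    have horthE : ∀ z z', star (EE z) ⬝ᵥ EE z' = if z = z' then 1 else 0 := by
      intro z z'
      by_cases hzz : z = z'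
      · subst hzz
        rw [if_pos rfl]
        exact hEnorm z
      · rw [if_neg hzz]
        have hg := complete_gram V2 hcard2 hcomp2 z z'
        rw [if_neg hzz, hfact z z'] at hg
        have hne : (((Real.sqrt (qq z) : ℝ) : ℂ) * ((Real.sqrt (qq z') : ℝ) : ℂ)) ≠ 0 := by
          apply mul_ne_zero <;>
          · rw [Ne, Complex.ofReal_eq_zero]
            exact ne_of_gt (Real.sqrt_pos.mpr (hqpos _))
        exact (mul_eq_zero.mp hg).resolve_left hne
    apply huncomp
    exact ⟨k, ψ, φ, hksn.trans hn, horthE⟩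
end

section
/- The five vectors v_i = N(cos(2πi/5), sin(2πi/5), h) ∈ R³, i = 0,…,4, with h = (1/2)√(1+√5) and N = 2/√(5+√5), are unit vectors, and no single unit vector in R³ is orthogonal to more than two of them; moreover v_i·v_j = 0 if and only if j ≡ i ± 2 (mod 5). -/
open Matrix BigOperators Real

/-- The 'pentagon' vectors v_i = N (cos(2πi/5), sin(2πi/5), h) in R³,
with h = (1/2)√(1+√5) and N = 2/√(5+√5). -/
noncomputable def pentV (i : Fin 5) : Fin 3 → ℝ :=
  fun k =>
    (2 / Real.sqrt (5 + Real.sqrt 5)) *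
      ![Real.cos (2 * Real.pi * (i : ℕ) / 5),
        Real.sin (2 * Real.pi * (i : ℕ) / 5),
        (1 / 2) * Real.sqrt (1 + Real.sqrt 5)] k



noncomputable def Cv : Fin 5 → ℝ :=
  ![1, (Real.sqrt 5 - 1)/4, -(1 + Real.sqrt 5)/4, -(1 + Real.sqrt 5)/4, (Real.sqrt 5 - 1)/4]
noncomputable def Ev : Fin 5 → ℝ :=
  ![0, 1, (Real.sqrt 5 - 1)/2, -((Real.sqrt 5 - 1)/2), -1]

lemma sqrt5_sq : (Real.sqrt 5) ^ 2 = 5 := Real.sq_sqrt (by norm_num)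
lemma sqrt5_gt : 2 < Real.sqrt 5 := by nlinarith [sqrt5_sq, Real.sqrt_nonneg 5]
lemma sqrt5_lt : Real.sqrt 5 < 3 := by nlinarith [sqrt5_sq, Real.sqrt_nonneg 5]
lemma cos25 : Real.cos (2 * π / 5) = (Real.sqrt 5 - 1) / 4 := by
  have h : 2 * π / 5 = 2 * (π / 5) := by ring
  rw [h, Real.cos_two_mul, Real.cos_pi_div_five]
  linear_combination (1/8) * sqrt5_sq
lemma cos45 : Real.cos (4 * π / 5) = -(1 + Real.sqrt 5) / 4 := by
  have h : 4 * π / 5 = 2 * (2 * π / 5) := by ring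
  rw [h, Real.cos_two_mul, cos25]
  linear_combination (1/8) * sqrt5_sq
lemma sin25_sq : Real.sin (2 * π / 5) ^ 2 = (5 + Real.sqrt 5) / 8 := by
  have := Real.sin_sq_add_cos_sq (2 * π / 5)
  rw [cos25] at this
  linear_combination this - (1/16) * sqrt5_sq
lemma sin25_pos : 0 < Real.sin (2 * π / 5) := by
  apply Real.sin_pos_of_pos_of_lt_pi
  · positivity
  · nlinarith [Real.pi_pos]
lemma sin45 : Real.sin (4 * π / 5) = Real.sin (2 * π / 5) * (Real.sqrt 5 - 1) / 2 := by
  have h : 4 * π / 5 = 2 * (2 * π / 5) := by ring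
  rw [h, Real.sin_two_mul, cos25]; ring

lemma cosθ (i : Fin 5) : Real.cos (2 * π * (i : ℕ) / 5) = Cv i := by
  fin_cases i <;> norm_num [Cv]
  · exact cos25
  · rw [show (2:ℝ)*π*2/5 = 4*π/5 by ring, cos45]; ring
  · rw [show (2:ℝ)*π*3/5 = -(4*π/5)+2*π by ring, Real.cos_add_two_pi, Real.cos_neg, cos45]; ring
  · rw [show (2:ℝ)*π*4/5 = -(2*π/5)+2*π by ring, Real.cos_add_two_pi, Real.cos_neg, cos25]

lemma sinθ (i : Fin 5) : Real.sin (2 * π * (i : ℕ) / 5) = Ev i * Real.sin (2 * π / 5) := by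
  fin_cases i <;> norm_num [Ev]
  · rw [show (2:ℝ)*π*2/5 = 4*π/5 by ring, sin45]; ring
  · rw [show (2:ℝ)*π*3/5 = -(4*π/5)+2*π by ring, Real.sin_add_two_pi, Real.sin_neg, sin45]; ring
  · rw [show (2:ℝ)*π*4/5 = -(2*π/5)+2*π by ring, Real.sin_add_two_pi, Real.sin_neg]


lemma dot_pent (i j : Fin 5) :
    pentV i ⬝ᵥ pentV j = ((5 - Real.sqrt 5)/5) *
      (Cv i * Cv j + (Ev i * Real.sin (2*π/5)) * (Ev j * Real.sin (2*π/5)) + (1 + Real.sqrt 5)/4) := by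
  have h1 : (0:ℝ) < 5 + Real.sqrt 5 := by positivity
  have hb : (Real.sqrt (5 + Real.sqrt 5)) ^ 2 = 5 + Real.sqrt 5 := Real.sq_sqrt h1.le
  have hc : (Real.sqrt (1 + Real.sqrt 5)) ^ 2 = 1 + Real.sqrt 5 := Real.sq_sqrt (by positivity)
  have e : ∀ p q : ℝ, (2/Real.sqrt (5 + Real.sqrt 5)) * p * ((2/Real.sqrt (5 + Real.sqrt 5)) * q)
      = ((5 - Real.sqrt 5)/5) * (p*q) := by
    intro p q
    have hbb : (2/Real.sqrt (5 + Real.sqrt 5)) * (2/Real.sqrt (5 + Real.sqrt 5)) = (5 - Real.sqrt 5)/5 := by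
      rw [div_mul_div_comm, show Real.sqrt (5 + Real.sqrt 5) * Real.sqrt (5 + Real.sqrt 5)
        = Real.sqrt (5 + Real.sqrt 5) ^ 2 by ring, hb,
        div_eq_div_iff (by positivity) (by norm_num)]
      linear_combination sqrt5_sq
    calc (2/Real.sqrt (5 + Real.sqrt 5)) * p * ((2/Real.sqrt (5 + Real.sqrt 5)) * q)
        = ((2/Real.sqrt (5 + Real.sqrt 5)) * (2/Real.sqrt (5 + Real.sqrt 5))) * (p*q) := by ring
      _ = ((5 - Real.sqrt 5)/5) * (p*q) := by rw [hbb]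
  rw [← cosθ, ← cosθ, ← sinθ, ← sinθ]
  simp only [pentV, dotProduct, Fin.sum_univ_three, Matrix.cons_val_zero,
    Matrix.cons_val_one, Matrix.head_cons, Matrix.cons_val_two, Matrix.tail_cons]
  rw [e, e, e]
  linear_combination ((5 - Real.sqrt 5)/20) * hc

lemma dot_eq (i j : Fin 5) : pentV i ⬝ᵥ pentV j =
    if j = i + 2 ∨ j = i - 2 then 0 else if j = i then 1 else (Real.sqrt 5 - 1)/2 := by
  rw [dot_pent]
  fin_cases i <;> fin_cases j
  · rw [if_neg (by decide), if_pos (by decide)]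
    norm_num [Cv, Ev, -mul_eq_zero] <;> linear_combination ((-1/20)) * sqrt5_sq + (0) * sin25_sq
  · rw [if_neg (by decide), if_neg (by decide)]
    norm_num [Cv, Ev, -mul_eq_zero] <;> linear_combination ((-1/10)) * sqrt5_sq + (0) * sin25_sq
  · rw [if_pos (by decide)]
    norm_num [Cv, Ev, -mul_eq_zero] <;> linear_combination (0) * sqrt5_sq + (0) * sin25_sq
  · rw [if_pos (by decide)]
    norm_num [Cv, Ev, -mul_eq_zero] <;> linear_combination (0) * sqrt5_sq + (0) * sin25_sq
  · rw [if_neg (by decide), if_neg (by decide)]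
    norm_num [Cv, Ev, -mul_eq_zero] <;> linear_combination ((-1/10)) * sqrt5_sq + (0) * sin25_sq
  · rw [if_neg (by decide), if_neg (by decide)]
    norm_num [Cv, Ev, -mul_eq_zero] <;> linear_combination ((-1/10)) * sqrt5_sq + (0) * sin25_sq
  · rw [if_neg (by decide), if_pos (by decide)]
    norm_num [Cv, Ev, -mul_eq_zero] <;> linear_combination ((1/80) + (-1/80)*Real.sqrt 5) * sqrt5_sq + ((1) + (-1/5)*Real.sqrt 5) * sin25_sq
  · rw [if_neg (by decide), if_neg (by decide)]
    norm_num [Cv, Ev, -mul_eq_zero] <;> linear_combination ((-1/10)) * sqrt5_sq + ((-1/2) + (3/5)*Real.sqrt 5 + (-1/10)*Real.sqrt 5^2) * sin25_sq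
  · rw [if_pos (by decide)]
    norm_num [Cv, Ev, -mul_eq_zero] <;> linear_combination ((-1/8) + (1/40)*Real.sqrt 5) * sqrt5_sq + ((1/2) + (-3/5)*Real.sqrt 5 + (1/10)*Real.sqrt 5^2) * sin25_sq
  · rw [if_pos (by decide)]
    norm_num [Cv, Ev, -mul_eq_zero] <;> linear_combination ((1/16) + (-1/80)*Real.sqrt 5) * sqrt5_sq + ((-1) + (1/5)*Real.sqrt 5) * sin25_sq
  · rw [if_pos (by decide)]
    norm_num [Cv, Ev, -mul_eq_zero] <;> linear_combination (0) * sqrt5_sq + (0) * sin25_sq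
  · rw [if_neg (by decide), if_neg (by decide)]
    norm_num [Cv, Ev, -mul_eq_zero] <;> linear_combination ((-1/10)) * sqrt5_sq + ((-1/2) + (3/5)*Real.sqrt 5 + (-1/10)*Real.sqrt 5^2) * sin25_sq
  · rw [if_neg (by decide), if_pos (by decide)]
    norm_num [Cv, Ev, -mul_eq_zero] <;> linear_combination ((17/160) + (-1/160)*Real.sqrt 5^2) * sqrt5_sq + ((1/4) + (-11/20)*Real.sqrt 5 + (7/20)*Real.sqrt 5^2 + (-1/20)*Real.sqrt 5^3) * sin25_sq
  · rw [if_neg (by decide), if_neg (by decide)]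
    norm_num [Cv, Ev, -mul_eq_zero] <;> linear_combination ((-21/160) + (-1/40)*Real.sqrt 5 + (1/160)*Real.sqrt 5^2) * sqrt5_sq + ((-1/4) + (11/20)*Real.sqrt 5 + (-7/20)*Real.sqrt 5^2 + (1/20)*Real.sqrt 5^3) * sin25_sq
  · rw [if_pos (by decide)]
    norm_num [Cv, Ev, -mul_eq_zero] <;> linear_combination ((-1/8) + (1/40)*Real.sqrt 5) * sqrt5_sq + ((1/2) + (-3/5)*Real.sqrt 5 + (1/10)*Real.sqrt 5^2) * sin25_sq
  · rw [if_pos (by decide)]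
    norm_num [Cv, Ev, -mul_eq_zero] <;> linear_combination (0) * sqrt5_sq + (0) * sin25_sq
  · rw [if_pos (by decide)]
    norm_num [Cv, Ev, -mul_eq_zero] <;> linear_combination ((-1/8) + (1/40)*Real.sqrt 5) * sqrt5_sq + ((1/2) + (-3/5)*Real.sqrt 5 + (1/10)*Real.sqrt 5^2) * sin25_sq
  · rw [if_neg (by decide), if_neg (by decide)]
    norm_num [Cv, Ev, -mul_eq_zero] <;> linear_combination ((-21/160) + (-1/40)*Real.sqrt 5 + (1/160)*Real.sqrt 5^2) * sqrt5_sq + ((-1/4) + (11/20)*Real.sqrt 5 + (-7/20)*Real.sqrt 5^2 + (1/20)*Real.sqrt 5^3) * sin25_sq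
  · rw [if_neg (by decide), if_pos (by decide)]
    norm_num [Cv, Ev, -mul_eq_zero] <;> linear_combination ((17/160) + (-1/160)*Real.sqrt 5^2) * sqrt5_sq + ((1/4) + (-11/20)*Real.sqrt 5 + (7/20)*Real.sqrt 5^2 + (-1/20)*Real.sqrt 5^3) * sin25_sq
  · rw [if_neg (by decide), if_neg (by decide)]
    norm_num [Cv, Ev, -mul_eq_zero] <;> linear_combination ((-1/10)) * sqrt5_sq + ((-1/2) + (3/5)*Real.sqrt 5 + (-1/10)*Real.sqrt 5^2) * sin25_sq
  · rw [if_neg (by decide), if_neg (by decide)]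
    norm_num [Cv, Ev, -mul_eq_zero] <;> linear_combination ((-1/10)) * sqrt5_sq + (0) * sin25_sq
  · rw [if_pos (by decide)]
    norm_num [Cv, Ev, -mul_eq_zero] <;> linear_combination ((1/16) + (-1/80)*Real.sqrt 5) * sqrt5_sq + ((-1) + (1/5)*Real.sqrt 5) * sin25_sq
  · rw [if_pos (by decide)]
    norm_num [Cv, Ev, -mul_eq_zero] <;> linear_combination ((-1/8) + (1/40)*Real.sqrt 5) * sqrt5_sq + ((1/2) + (-3/5)*Real.sqrt 5 + (1/10)*Real.sqrt 5^2) * sin25_sq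
  · rw [if_neg (by decide), if_neg (by decide)]
    norm_num [Cv, Ev, -mul_eq_zero] <;> linear_combination ((-1/10)) * sqrt5_sq + ((-1/2) + (3/5)*Real.sqrt 5 + (-1/10)*Real.sqrt 5^2) * sin25_sq
  · rw [if_neg (by decide), if_pos (by decide)]
    norm_num [Cv, Ev, -mul_eq_zero] <;> linear_combination ((1/80) + (-1/80)*Real.sqrt 5) * sqrt5_sq + ((1) + (-1/5)*Real.sqrt 5) * sin25_sq

lemma dot_pentV (u : Fin 3 → ℝ) (m : Fin 5) :
    u ⬝ᵥ pentV m = (2 / Real.sqrt (5 + Real.sqrt 5)) *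
      (Cv m * u 0 + (Ev m * Real.sin (2*π/5)) * u 1 + (Real.sqrt (1 + Real.sqrt 5)/2) * u 2) := by
  rw [← cosθ, ← sinθ]
  simp only [pentV, dotProduct, Fin.sum_univ_three, Matrix.cons_val_zero,
    Matrix.cons_val_one, Matrix.head_cons, Matrix.cons_val_two, Matrix.tail_cons]
  ring

lemma cramer3 (a1 b1 a2 b2 a3 b3 h x y z : ℝ)
    (e1 : a1*x + b1*y + h*z = 0) (e2 : a2*x + b2*y + h*z = 0) (e3 : a3*x + b3*y + h*z = 0)
    (hh : h ≠ 0) (hd : (a1 - a2)*(b1 - b3) - (a1 - a3)*(b1 - b2) ≠ 0) :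
    x = 0 ∧ y = 0 ∧ z = 0 := by
  have hx : x * ((a1 - a2)*(b1 - b3) - (a1 - a3)*(b1 - b2)) = 0 := by
    linear_combination (b1 - b3) * e1 - (b1 - b3) * e2 - (b1 - b2) * e1 + (b1 - b2) * e3
  have hy : y * ((a1 - a2)*(b1 - b3) - (a1 - a3)*(b1 - b2)) = 0 := by
    linear_combination -(a1 - a3) * e1 + (a1 - a3) * e2 + (a1 - a2) * e1 - (a1 - a2) * e3
  have hx0 : x = 0 := (mul_eq_zero.1 hx).resolve_right hd
  have hy0 : y = 0 := (mul_eq_zero.1 hy).resolve_right hd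
  refine ⟨hx0, hy0, ?_⟩
  rw [hx0, hy0] at e1
  have hz : h * z = 0 := by linear_combination e1
  exact (mul_eq_zero.1 hz).resolve_left hh

set_option maxHeartbeats 3000000 in
lemma det_ne (i j k : Fin 5) (hij : i ≠ j) (hik : i ≠ k) (hjk : j ≠ k) :
    (Cv i - Cv j) * (Ev i * Real.sin (2*π/5) - Ev k * Real.sin (2*π/5))
      - (Cv i - Cv k) * (Ev i * Real.sin (2*π/5) - Ev j * Real.sin (2*π/5)) ≠ 0 := by
  fin_cases i <;> fin_cases j <;> fin_cases k <;>
    first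
      | exact absurd rfl hij
      | exact absurd rfl hik
      | exact absurd rfl hjk
      | (norm_num [Cv, Ev, -mul_eq_zero]
         intro hD
         nlinarith [sin25_pos, sqrt5_sq, sqrt5_gt, sqrt5_lt, Real.sqrt_nonneg 5])


/-- The pentagon vectors are unit vectors; no unit vector in R³ is
orthogonal to more than two of them; and v_i · v_j = 0 iff j ≡ i ± 2 (mod 5). -/
theorem pentagon_vectors :
    (∀ i, pentV i ⬝ᵥ pentV i = 1) ∧
    (∀ u : Fin 3 → ℝ, u ⬝ᵥ u = 1 →
      ({i : Fin 5 | u ⬝ᵥ pentV i = 0} : Set (Fin 5)).ncard ≤ 2) ∧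
    (∀ i j : Fin 5, pentV i ⬝ᵥ pentV j = 0 ↔ (j = i + 2 ∨ j = i - 2)) := by
  refine ⟨?_, ?_, ?_⟩
  · intro i
    rw [dot_eq, if_neg (by fin_cases i <;> decide), if_pos rfl]
  · intro u hu
    by_contra hc
    push_neg at hc
    obtain ⟨t, hts, htc⟩ := Set.exists_subset_card_eq (n := 3) hc
    rw [Set.ncard_eq_three] at htc
    obtain ⟨i, j, k, hij, hik, hjk, rfl⟩ := htc
    have key : ∀ m : Fin 5, u ⬝ᵥ pentV m = 0 →
        Cv m * u 0 + (Ev m * Real.sin (2*π/5)) * u 1 + (Real.sqrt (1 + Real.sqrt 5)/2) * u 2 = 0 := by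
      intro m hm
      have hdm := dot_pentV u m
      rw [hm] at hdm
      have hN : (2 / Real.sqrt (5 + Real.sqrt 5)) ≠ 0 := by positivity
      rcases mul_eq_zero.1 hdm.symm with h'|h'
      · exact absurd h' hN
      · exact h'
    have e1 := key i (hts (by simp))
    have e2 := key j (hts (by simp))
    have e3 := key k (hts (by simp))
    have hh : (Real.sqrt (1 + Real.sqrt 5)/2) ≠ 0 := by positivity
    have hdet := det_ne i j k hij hik hjk
    obtain ⟨hx, hy, hz⟩ := cramer3 _ _ _ _ _ _ _ _ _ _ e1 e2 e3 hh hdet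
    rw [dotProduct, Fin.sum_univ_three, hx, hy, hz] at hu
    norm_num at hu
  · intro i j
    rw [dot_eq]
    split_ifs with h1 h2
    · simp [h1]
    · exact iff_of_false (by norm_num) h1
    · exact iff_of_false (by intro h'; nlinarith [sqrt5_gt]) h1
end
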